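/- Let (G, k) be a reduced instance of the diamond-free editing problem and let u, v be two nonadjacent vertices of G. Then the set N(u, v) = (N(u) ∩ N(v)) \ S(G) is an independent set of G. Moreover, if (E+, E−) is a solution of (G, k) with uv ∈ E+, then |N(u, v)| ≤ k. -/
import Mathlib


variable {V : Type*}

/-- An induced diamond on vertices `u v x y`: all five edges present except `xy`;
`uv` is the cross edge and `xy` the missing edge. -/
def IsDiamond (G : SimpleGraph V) (u v x y : V) : Prop :=
  u ≠ v ∧ u ≠ x ∧ u ≠ y ∧ v ≠ x ∧ v ≠ y ∧ x ≠ y ∧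
  G.Adj u v ∧ G.Adj u x ∧ G.Adj u y ∧ G.Adj v x ∧ G.Adj v y ∧ ¬ G.Adj x y

def DiamondFree (G : SimpleGraph V) : Prop :=
  ∀ u v x y : V, ¬ IsDiamond G u v x y

/-- The graph `G △ E±` obtained from `G` by adding the edges of `Ep` and
deleting the edges of `Em`. -/
def EditedGraph (G : SimpleGraph V) (Ep Em : Finset (Sym2 V)) : SimpleGraph V :=
  SimpleGraph.fromEdgeSet ((G.edgeSet ∪ ↑Ep) \ ↑Em)

/-- `(Ep, Em)` is a solution of the instance `(G, k)` of diamond-free editing: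
`Ep` is a set of non-edges of `G`, `Em` a set of edges of `G`,
`|Ep| + |Em| ≤ k`, and the edited graph is diamond-free. -/
def IsSolution (G : SimpleGraph V) (k : ℕ) (Ep Em : Finset (Sym2 V)) : Prop :=
  (∀ e ∈ Ep, e ∉ G.edgeSet ∧ ¬ e.IsDiag) ∧
  (∀ e ∈ Em, e ∈ G.edgeSet) ∧
  Ep.card + Em.card ≤ k ∧
  DiamondFree (EditedGraph G Ep Em)

def YesInstance (G : SimpleGraph V) (k : ℕ) : Prop :=
  ∃ Ep Em : Finset (Sym2 V), IsSolution G k Ep Em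

/-- A minimum solution: a solution such that no valid edit set of strictly
smaller total size makes the graph diamond-free. -/
def IsMinSolution (G : SimpleGraph V) (k : ℕ) (Ep Em : Finset (Sym2 V)) : Prop :=
  IsSolution G k Ep Em ∧
  ∀ Ep' Em' : Finset (Sym2 V),
    (∀ e ∈ Ep', e ∉ G.edgeSet ∧ ¬ e.IsDiag) →
    (∀ e ∈ Em', e ∈ G.edgeSet) →
    DiamondFree (EditedGraph G Ep' Em') →
    Ep.card + Em.card ≤ Ep'.card + Em'.card

/-- There are `2k+2` distinct vertices `x 0, y 0, …, x k, y k` in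
`N(u) ∩ N(v)` with each `x i y i` an edge of `G`. -/
def EdgePairedWitness (G : SimpleGraph V) (k : ℕ) (u v : V) : Prop :=
  ∃ x y : Fin (k + 1) → V,
    Function.Injective (Sum.elim x y) ∧
    (∀ i, G.Adj u (x i) ∧ G.Adj v (x i) ∧ G.Adj u (y i) ∧ G.Adj v (y i)) ∧
    (∀ i, G.Adj (x i) (y i))

/-- There are `2k+2` distinct vertices `x 0, y 0, …, x k, y k` in
`N(u) ∩ N(v)` with each `x i y i` a non-edge of `G`. -/
def NonEdgePairedWitness (G : SimpleGraph V) (k : ℕ) (u v : V) : Prop :=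
  ∃ x y : Fin (k + 1) → V,
    Function.Injective (Sum.elim x y) ∧
    (∀ i, G.Adj u (x i) ∧ G.Adj v (x i) ∧ G.Adj u (y i) ∧ G.Adj v (y i)) ∧
    (∀ i, ¬ G.Adj (x i) (y i))

/-- The instance `(G, k)` is reduced: neither sunflower rule applies. -/
def Reduced (G : SimpleGraph V) (k : ℕ) : Prop :=
  (∀ u v : V, u ≠ v → ¬ G.Adj u v → ¬ EdgePairedWitness G k u v) ∧
  (∀ u v : V, G.Adj u v → ¬ NonEdgePairedWitness G k u v)

/-- `K` is a maximal clique of `G`. -/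
def IsMaxClique (G : SimpleGraph V) (K : Finset V) : Prop :=
  G.IsClique (↑K : Set V) ∧
  ∀ K' : Finset V, G.IsClique (↑K' : Set V) → K ⊆ K' → K = K'

/-- `K` is a type-I maximal clique: it shares at least two vertices with some
other maximal clique. -/
def TypeI [DecidableEq V] (G : SimpleGraph V) (K : Finset V) : Prop :=
  IsMaxClique G K ∧
  ∃ K' : Finset V, IsMaxClique G K' ∧ K' ≠ K ∧ 2 ≤ (K ∩ K').card

/-- `K` is a type-II maximal clique: it shares at most one vertex with every
other maximal clique. -/
def TypeII [DecidableEq V] (G : SimpleGraph V) (K : Finset V) : Prop :=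
  IsMaxClique G K ∧
  ∀ K' : Finset V, IsMaxClique G K' → K' ≠ K → (K ∩ K').card ≤ 1

/-- A small (fewer than `3k+2` vertices) type-I maximal clique. -/
def SmallTypeI [DecidableEq V] (G : SimpleGraph V) (k : ℕ) (K : Finset V) : Prop :=
  TypeI G K ∧ K.card < 3 * k + 2

/-- `S(G)`: the union of all small type-I maximal cliques of `G`. -/
def SG [DecidableEq V] (G : SimpleGraph V) (k : ℕ) : Set V :=
  {v | ∃ K : Finset V, SmallTypeI G k K ∧ v ∈ K}

/-- A vulnerable vertex: it is in a small type-I maximal clique, or in a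
type-II maximal clique intersecting a small type-I maximal clique. -/
def Vulnerable [DecidableEq V] (G : SimpleGraph V) (k : ℕ) (v : V) : Prop :=
  (∃ K : Finset V, SmallTypeI G k K ∧ v ∈ K) ∨
  (∃ K1 K2 : Finset V, SmallTypeI G k K1 ∧ TypeII G K2 ∧
    (K1 ∩ K2).Nonempty ∧ v ∈ K2)


lemma exists_maxClique_finset' [Fintype V] [DecidableEq V] (G : SimpleGraph V)
    (s : Finset V) (hs : G.IsClique (↑s : Set V)) :
    ∃ K : Finset V, IsMaxClique G K ∧ s ⊆ K := by
  classical
  have hne : (Finset.univ.powerset.filter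
      (fun K : Finset V => G.IsClique (↑K : Set V) ∧ s ⊆ K)).Nonempty :=
    ⟨s, by simp [hs]⟩
  obtain ⟨K, hK, hmax⟩ := Finset.exists_max_image _ Finset.card hne
  simp only [Finset.mem_filter, Finset.mem_powerset] at hK
  refine ⟨K, ⟨hK.2.1, ?_⟩, hK.2.2⟩
  intro K' hK' hsub
  refine Finset.eq_of_subset_of_card_le hsub (hmax K' ?_)
  simp only [Finset.mem_filter, Finset.mem_powerset]
  exact ⟨Finset.subset_univ _, hK', hK.2.2.trans hsub⟩

lemma witness_of_clique' [DecidableEq V] {k : ℕ} {G : SimpleGraph V} {p q : V}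
    (T : Finset V) (hT : G.IsClique (↑T : Set V))
    (hadjT : ∀ t ∈ T, G.Adj p t ∧ G.Adj q t)
    (hcard : 2 * k + 2 ≤ T.card) : EdgePairedWitness G k p q := by
  classical
  obtain ⟨T', hT'sub, hT'card⟩ := Finset.exists_subset_card_eq hcard
  let e := Finset.equivFinOfCardEq hT'card
  let f : Fin (2 * k + 2) → V := fun i => ((e.symm i : T') : V)
  have hfinj : Function.Injective f := by
    intro i j h
    have h2 : e.symm i = e.symm j := Subtype.ext h
    simpa using congrArg e h2
  have hfT : ∀ i, f i ∈ T := fun i => hT'sub (e.symm i).2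
  refine ⟨fun i => f ⟨2 * i.1, by have := i.2; omega⟩,
          fun i => f ⟨2 * i.1 + 1, by have := i.2; omega⟩, ?_, ?_, ?_⟩
  · rintro (i | i) (j | j) h
    · have h2 := hfinj h
      simp only [Fin.mk.injEq] at h2
      exact congrArg Sum.inl (Fin.ext (by omega))
    · have h2 := hfinj h
      simp only [Fin.mk.injEq] at h2
      exact absurd h2 (by omega)
    · have h2 := hfinj h
      simp only [Fin.mk.injEq] at h2
      exact absurd h2 (by omega)
    · have h2 := hfinj h
      simp only [Fin.mk.injEq] at h2
      exact congrArg Sum.inr (Fin.ext (by omega))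
  · intro i
    exact ⟨(hadjT _ (hfT _)).1, (hadjT _ (hfT _)).2, (hadjT _ (hfT _)).1, (hadjT _ (hfT _)).2⟩
  · intro i
    refine hT (Finset.mem_coe.2 (hfT _)) (Finset.mem_coe.2 (hfT _)) fun hEq => ?_
    have h2 := hfinj hEq
    simp only [Fin.mk.injEq] at h2
    omega

lemma clique_bound' [Fintype V] [DecidableEq V] {G : SimpleGraph V} {k : ℕ}
    (hred : Reduced G k) {p q : V} (hpq : p ≠ q) (hnadj : ¬ G.Adj p q)
    (T : Finset V) (hT : G.IsClique (↑T : Set V))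
    (hadjT : ∀ t ∈ T, G.Adj p t ∧ G.Adj q t) : T.card ≤ 2 * k + 1 := by
  by_contra h
  exact hred.1 p q hpq hnadj (witness_of_clique' T hT hadjT (by omega))

/-- for nonadjacent `u, v` in a reduced instance,
`N(u, v) = (N(u) ∩ N(v)) \ S(G)` is independent; and if `uv ∈ E+` for a
solution then `|N(u, v)| ≤ k`. -/
theorem stmt17 [Fintype V] [DecidableEq V] (G : SimpleGraph V) (k : ℕ)
    (hred : Reduced G k) (u v : V) (hne : u ≠ v) (hnadj : ¬ G.Adj u v) :
    (∀ a ∈ (G.neighborSet u ∩ G.neighborSet v) \ SG G k,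
       ∀ b ∈ (G.neighborSet u ∩ G.neighborSet v) \ SG G k, ¬ G.Adj a b) ∧
    (∀ Ep Em : Finset (Sym2 V), IsSolution G k Ep Em → s(u, v) ∈ Ep →
       ((G.neighborSet u ∩ G.neighborSet v) \ SG G k).ncard ≤ k) := by
    classical
  have hindep : ∀ a ∈ (G.neighborSet u ∩ G.neighborSet v) \ SG G k,
      ∀ b ∈ (G.neighborSet u ∩ G.neighborSet v) \ SG G k, ¬ G.Adj a b := by
    rintro a ⟨⟨hua, hva⟩, haS⟩ b ⟨⟨hub, hvb⟩, hbS⟩ hab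
    rw [SimpleGraph.mem_neighborSet] at hua hva hub hvb
    have hab' : a ≠ b := G.ne_of_adj hab
    have hcl1 : G.IsClique (↑({u, a, b} : Finset V) : Set V) := by
      intro x hx y hy hxy
      simp only [Finset.coe_insert, Finset.coe_singleton, Set.mem_insert_iff,
        Set.mem_singleton_iff] at hx hy
      rcases hx with rfl | rfl | rfl <;> rcases hy with rfl | rfl | rfl
      · exact absurd rfl hxy
      · exact hua
      · exact hub
      · exact hua.symm
      · exact absurd rfl hxy
      · exact hab
      · exact hub.symm
      · exact hab.symm
      · exact absurd rfl hxy
    have hcl2 : G.IsClique (↑({v, a, b} : Finset V) : Set V) := by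
      intro x hx y hy hxy
      simp only [Finset.coe_insert, Finset.coe_singleton, Set.mem_insert_iff,
        Set.mem_singleton_iff] at hx hy
      rcases hx with rfl | rfl | rfl <;> rcases hy with rfl | rfl | rfl
      · exact absurd rfl hxy
      · exact hva
      · exact hvb
      · exact hva.symm
      · exact absurd rfl hxy
      · exact hab
      · exact hvb.symm
      · exact hab.symm
      · exact absurd rfl hxy
    obtain ⟨K1, hK1, hsub1⟩ := exists_maxClique_finset' G _ hcl1
    obtain ⟨K2, hK2, hsub2⟩ := exists_maxClique_finset' G _ hcl2
    have huK1 : u ∈ K1 := hsub1 (by simp)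
    have haK1 : a ∈ K1 := hsub1 (by simp)
    have hbK1 : b ∈ K1 := hsub1 (by simp)
    have hvK2 : v ∈ K2 := hsub2 (by simp)
    have haK2 : a ∈ K2 := hsub2 (by simp)
    have hbK2 : b ∈ K2 := hsub2 (by simp)
    have hvK1 : v ∉ K1 := fun hv =>
      hnadj (hK1.1 (Finset.mem_coe.2 huK1) (Finset.mem_coe.2 hv) hne)
    have huK2 : u ∉ K2 := fun hu =>
      hnadj ((hK2.1 (Finset.mem_coe.2 hvK2) (Finset.mem_coe.2 hu) (Ne.symm hne)).symm)
    have hK2ne : K2 ≠ K1 := fun h => huK2 (h ▸ huK1)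
    have hK1ne : K1 ≠ K2 := fun h => hvK1 (h ▸ hvK2)
    have hint12 : 2 ≤ (K1 ∩ K2).card := by
      have hsubab : ({a, b} : Finset V) ⊆ K1 ∩ K2 := by
        intro x hx
        rcases Finset.mem_insert.1 hx with rfl | hx
        · exact Finset.mem_inter.2 ⟨haK1, haK2⟩
        · rw [Finset.mem_singleton] at hx
          subst hx
          exact Finset.mem_inter.2 ⟨hbK1, hbK2⟩
      calc 2 = ({a, b} : Finset V).card := (Finset.card_pair hab').symm
        _ ≤ _ := Finset.card_le_card hsubab
    have hint21 : 2 ≤ (K2 ∩ K1).card := by rw [Finset.inter_comm]; exact hint12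
    have hbig1 : 3 * k + 2 ≤ K1.card := by
      by_contra h
      exact haS ⟨K1, ⟨⟨hK1, K2, hK2, hK2ne, hint12⟩, by omega⟩, haK1⟩
    have hbig2 : 3 * k + 2 ≤ K2.card := by
      by_contra h
      exact haS ⟨K2, ⟨⟨hK2, K1, hK1, hK1ne, hint21⟩, by omega⟩, haK2⟩
    have hAv : k + 1 ≤ (K1.filter (fun w => ¬ G.Adj v w)).card := by
      have hb : (K1.filter (fun w => G.Adj v w)).card ≤ 2 * k + 1 := by
        refine clique_bound' hred hne hnadj _
          ((hK1.1).subset (Finset.coe_subset.2 (Finset.filter_subset _ _))) ?_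
        intro t ht
        have htK : t ∈ K1 := Finset.mem_of_mem_filter _ ht
        have htv : G.Adj v t := (Finset.mem_filter.1 ht).2
        have htu : t ≠ u := fun h => hnadj (h ▸ htv).symm
        exact ⟨hK1.1 (Finset.mem_coe.2 huK1) (Finset.mem_coe.2 htK) (Ne.symm htu), htv⟩
      have hsplit := Finset.card_filter_add_card_filter_not
        (s := K1) (fun w => G.Adj v w)
      omega
    have hBw : ∀ w, w ∈ K1 → ¬ G.Adj v w →
        k + 1 ≤ (K2.filter (fun z => ¬ G.Adj w z)).card := by
      intro w hwK1 hwv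
      have hwv' : w ≠ v := fun h => hvK1 (h ▸ hwK1)
      have hnadjwv : ¬ G.Adj w v := fun h => hwv h.symm
      have hb : (K2.filter (fun z => G.Adj w z)).card ≤ 2 * k + 1 := by
        refine clique_bound' hred hwv' hnadjwv _
          ((hK2.1).subset (Finset.coe_subset.2 (Finset.filter_subset _ _))) ?_
        intro t ht
        have htK : t ∈ K2 := Finset.mem_of_mem_filter _ ht
        have htw : G.Adj w t := (Finset.mem_filter.1 ht).2
        have htv : t ≠ v := fun h => hnadjwv (h ▸ htw)
        exact ⟨htw, hK2.1 (Finset.mem_coe.2 hvK2) (Finset.mem_coe.2 htK) (Ne.symm htv)⟩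
      have hsplit := Finset.card_filter_add_card_filter_not
        (s := K2) (fun z => G.Adj w z)
      omega
    obtain ⟨W, hWsub, hWcard⟩ := Finset.exists_subset_card_eq hAv
    let e := Finset.equivFinOfCardEq hWcard
    let x : Fin (k + 1) → V := fun i => ((e.symm i : W) : V)
    have hxinj : Function.Injective x := by
      intro i j h
      have h2 : e.symm i = e.symm j := Subtype.ext h
      simpa using congrArg e h2
    have hxW : ∀ i, x i ∈ W := fun i => (e.symm i).2
    have hxK1 : ∀ i, x i ∈ K1 := fun i => Finset.mem_of_mem_filter _ (hWsub (hxW i))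
    have hxv : ∀ i, ¬ G.Adj v (x i) := fun i => (Finset.mem_filter.1 (hWsub (hxW i))).2
    have hhall : ∀ s : Finset (Fin (k + 1)),
        s.card ≤ (s.biUnion (fun i => K2.filter (fun z => ¬ G.Adj (x i) z))).card := by
      intro s
      rcases s.eq_empty_or_nonempty with rfl | ⟨i, hi⟩
      · simp
      · calc s.card ≤ k + 1 := by simpa using Finset.card_le_univ s
          _ ≤ (K2.filter (fun z => ¬ G.Adj (x i) z)).card := hBw _ (hxK1 i) (hxv i)
          _ ≤ _ := Finset.card_le_card
              (Finset.subset_biUnion_of_mem (fun i => K2.filter (fun z => ¬ G.Adj (x i) z)) hi)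
    obtain ⟨y, hyinj, hy⟩ := (Finset.all_card_le_biUnion_card_iff_exists_injective _).1 hhall
    have hyK2 : ∀ i, y i ∈ K2 := fun i => Finset.mem_of_mem_filter _ (hy i)
    have hxy : ∀ i, ¬ G.Adj (x i) (y i) := fun i => (Finset.mem_filter.1 (hy i)).2
    have hxa : ∀ i, G.Adj a (x i) := by
      intro i
      have hxia : x i ≠ a := fun h => hxv i (by rw [h]; exact hva)
      exact hK1.1 (Finset.mem_coe.2 haK1) (Finset.mem_coe.2 (hxK1 i)) (Ne.symm hxia)
    have hxb : ∀ i, G.Adj b (x i) := by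
      intro i
      have hxib : x i ≠ b := fun h => hxv i (by rw [h]; exact hvb)
      exact hK1.1 (Finset.mem_coe.2 hbK1) (Finset.mem_coe.2 (hxK1 i)) (Ne.symm hxib)
    have hya : ∀ i, G.Adj a (y i) := by
      intro i
      have hyia : y i ≠ a := fun h => hxy i (by rw [h]; exact (hxa i).symm)
      exact hK2.1 (Finset.mem_coe.2 haK2) (Finset.mem_coe.2 (hyK2 i)) (Ne.symm hyia)
    have hyb : ∀ i, G.Adj b (y i) := by
      intro i
      have hyib : y i ≠ b := fun h => hxy i (by rw [h]; exact (hxb i).symm)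
      exact hK2.1 (Finset.mem_coe.2 hbK2) (Finset.mem_coe.2 (hyK2 i)) (Ne.symm hyib)
    have hxyne : ∀ i j, x i ≠ y j := by
      intro i j h
      have hxiK2 : x i ∈ K2 := by rw [h]; exact hyK2 j
      have hvxi : v ≠ x i := fun hv => hvK1 (by rw [hv]; exact hxK1 i)
      exact hxv i (hK2.1 (Finset.mem_coe.2 hvK2) (Finset.mem_coe.2 hxiK2) hvxi)
    refine hred.2 a b hab ⟨x, y, ?_, fun i => ⟨hxa i, hxb i, hya i, hyb i⟩, hxy⟩
    rintro (i | i) (j | j) h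
    · exact congrArg Sum.inl (hxinj h)
    · exact absurd h (hxyne i j)
    · exact absurd h.symm (hxyne j i)
    · exact congrArg Sum.inr (hyinj h)
  refine ⟨hindep, ?_⟩
  intro Ep Em hsol huvEp
  obtain ⟨hEp, hEm, hcard, hDF⟩ := hsol
  have hfin : ((G.neighborSet u ∩ G.neighborSet v) \ SG G k).Finite := Set.toFinite _
  rw [Set.ncard_eq_toFinset_card _ hfin]
  set F := hfin.toFinset with hF
  have hmemF : ∀ w, w ∈ F ↔ w ∈ (G.neighborSet u ∩ G.neighborSet v) \ SG G k :=
    fun w => Set.Finite.mem_toFinset hfin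
  have hFu : ∀ w ∈ F, G.Adj u w := fun w hw => ((hmemF w).1 hw).1.1
  have hFv : ∀ w ∈ F, G.Adj v w := fun w hw => ((hmemF w).1 hw).1.2
  have hdisj : ∀ e ∈ Ep, e ∉ Em := fun e he hm => (hEp e he).1 (hEm e hm)
  have huvEm : s(u, v) ∉ Em := fun h => hnadj (G.mem_edgeSet.1 (hEm _ h))
  have hG' : ∀ p q : V, p ≠ q → s(p, q) ∉ Em → (G.Adj p q ∨ s(p, q) ∈ Ep) →
      (EditedGraph G Ep Em).Adj p q := by
    intro p q hpq hm hor
    have : (SimpleGraph.fromEdgeSet ((G.edgeSet ∪ ↑Ep) \ ↑Em)).Adj p q := by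
      rw [SimpleGraph.fromEdgeSet_adj]
      refine ⟨⟨?_, fun hc => hm (Finset.mem_coe.1 hc)⟩, hpq⟩
      rcases hor with h | h
      · exact Or.inl (G.mem_edgeSet.2 h)
      · exact Or.inr (Finset.mem_coe.2 h)
    exact this
  have key : ∀ w ∈ F, ∀ w' ∈ F, w ≠ w' →
      s(u, w) ∉ Em → s(v, w) ∉ Em → s(u, w') ∉ Em → s(v, w') ∉ Em →
      s(w, w') ∈ Ep := by
    intro w hw w' hw' hww' h1 h2 h3 h4
    have hnadj' : ¬ G.Adj w w' := hindep w ((hmemF w).1 hw) w' ((hmemF w').1 hw')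
    have hadjG' : (EditedGraph G Ep Em).Adj w w' := by
      by_contra hc
      exact hDF u v w w' ⟨hne, (hFu w hw).ne, (hFu w' hw').ne, (hFv w hw).ne,
        (hFv w' hw').ne, hww',
        hG' u v hne huvEm (Or.inr huvEp),
        hG' u w (hFu w hw).ne h1 (Or.inl (hFu w hw)),
        hG' u w' (hFu w' hw').ne h3 (Or.inl (hFu w' hw')),
        hG' v w (hFv w hw).ne h2 (Or.inl (hFv w hw)),
        hG' v w' (hFv w' hw').ne h4 (Or.inl (hFv w' hw')), hc⟩
    have hadj2 : (SimpleGraph.fromEdgeSet ((G.edgeSet ∪ ↑Ep) \ ↑Em)).Adj w w' := hadjG'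
    rw [SimpleGraph.fromEdgeSet_adj] at hadj2
    rcases hadj2.1.1 with h | h
    · exact absurd (G.mem_edgeSet.1 h) hnadj'
    · exact Finset.mem_coe.1 h
  have huu : ∀ w ∈ F, ∀ w' ∈ F, s(u, w) = s(u, w') → w = w' := by
    intro w hw w' hw' h
    rcases Sym2.eq_iff.1 h with ⟨-, h2⟩ | ⟨-, h2⟩
    · exact h2
    · exact absurd h2 (hFu w hw).ne'
  have hvv : ∀ w ∈ F, ∀ w' ∈ F, s(v, w) = s(v, w') → w = w' := by
    intro w hw w' hw' h
    rcases Sym2.eq_iff.1 h with ⟨-, h2⟩ | ⟨-, h2⟩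
    · exact h2
    · exact absurd h2 (hFv w hw).ne'
  have huv2 : ∀ w ∈ F, ∀ (w' : V), s(u, w) = s(v, w') → False := by
    intro w hw w' h
    rcases Sym2.eq_iff.1 h with ⟨h1, -⟩ | ⟨-, h2⟩
    · exact hne h1
    · exact (hFv w hw).ne' h2
  by_cases hex : ∃ w₀ ∈ F, s(u, w₀) ∉ Em ∧ s(v, w₀) ∉ Em
  · obtain ⟨w₀, hw₀F, hw₀1, hw₀2⟩ := hex
    set φ : V → Sym2 V := fun w =>
      if s(u, w) ∈ Em then s(u, w)
      else if s(v, w) ∈ Em then s(v, w)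
      else if w = w₀ then s(u, v) else s(w₀, w) with hφ
    have hspec : ∀ w, (φ w ∈ Em ∧ (φ w = s(u, w) ∨ φ w = s(v, w)))
        ∨ (s(u, w) ∉ Em ∧ s(v, w) ∉ Em ∧
            ((w = w₀ ∧ φ w = s(u, v)) ∨ (w ≠ w₀ ∧ φ w = s(w₀, w)))) := by
      intro w
      simp only [hφ]
      split_ifs with c1 c2 c3
      · exact Or.inl ⟨c1, Or.inl rfl⟩
      · exact Or.inl ⟨c2, Or.inr rfl⟩
      · exact Or.inr ⟨c1, c2, Or.inl ⟨c3, rfl⟩⟩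
      · exact Or.inr ⟨c1, c2, Or.inr ⟨c3, rfl⟩⟩
    have hmaps : ∀ w ∈ F, φ w ∈ Ep ∪ Em := by
      intro w hw
      rcases hspec w with ⟨hm, -⟩ | ⟨h1, h2, ⟨-, hq⟩ | ⟨h3, hq⟩⟩
      · exact Finset.mem_union_right _ hm
      · rw [hq]; exact Finset.mem_union_left _ huvEp
      · rw [hq]
        exact Finset.mem_union_left _
          (key w₀ hw₀F w hw (fun h => h3 h.symm) hw₀1 hw₀2 h1 h2)
    have hinj : Set.InjOn φ ↑F := by
      intro w hw w' hw' heq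
      have hwF : w ∈ F := hw
      have hw'F : w' ∈ F := hw'
      rcases hspec w with ⟨hm, hq⟩ | ⟨h1, h2, hq⟩
      · rcases hspec w' with ⟨hm', hq'⟩ | ⟨h1', h2', hq'⟩
        · rcases hq with hq | hq <;> rcases hq' with hq' | hq'
          · exact huu w hwF w' hw'F (by rw [← hq, ← hq', heq])
          · exact absurd (by rw [← hq, ← hq', heq] : s(u, w) = s(v, w'))
              (fun h => huv2 w hwF w' h)
          · exact absurd (by rw [← hq, ← hq', heq.symm] : s(u, w') = s(v, w))
              (fun h => huv2 w' hw'F w h)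
          · exact hvv w hwF w' hw'F (by rw [← hq, ← hq', heq])
        · exfalso
          rcases hq' with ⟨-, hq'⟩ | ⟨h3', hq'⟩
          · rw [heq, hq'] at hm
            exact huvEm hm
          · rw [heq, hq'] at hm
            exact hdisj _ (key w₀ hw₀F w' hw'F (fun h => h3' h.symm) hw₀1 hw₀2 h1' h2') hm
      · rcases hspec w' with ⟨hm', hq'⟩ | ⟨h1', h2', hq'⟩
        · exfalso
          rcases hq with ⟨-, hq⟩ | ⟨h3, hq⟩
          · rw [← heq, hq] at hm'
            exact huvEm hm'
          · rw [← heq, hq] at hm'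
            exact hdisj _ (key w₀ hw₀F w hwF (fun h => h3 h.symm) hw₀1 hw₀2 h1 h2) hm'
        · rcases hq with ⟨he, hq⟩ | ⟨h3, hq⟩ <;> rcases hq' with ⟨he', hq'⟩ | ⟨h3', hq'⟩
          · rw [he, he']
          · exfalso
            have h5 : s(u, v) = s(w₀, w') := by rw [← hq, ← hq', heq]
            rcases Sym2.eq_iff.1 h5 with ⟨h6, -⟩ | ⟨h6, -⟩
            · exact (hFu w₀ hw₀F).ne h6
            · exact (hFu w' hw'F).ne h6
          · exfalso
            have h5 : s(u, v) = s(w₀, w) := by rw [← hq', ← hq, heq]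
            rcases Sym2.eq_iff.1 h5 with ⟨h6, -⟩ | ⟨h6, -⟩
            · exact (hFu w₀ hw₀F).ne h6
            · exact (hFu w hwF).ne h6
          · have h5 : s(w₀, w) = s(w₀, w') := by rw [← hq, ← hq', heq]
            rcases Sym2.eq_iff.1 h5 with ⟨-, h6⟩ | ⟨-, h6⟩
            · exact h6
            · exact absurd h6 h3
    calc F.card ≤ (Ep ∪ Em).card := Finset.card_le_card_of_injOn φ hmaps hinj
      _ ≤ Ep.card + Em.card := Finset.card_union_le _ _
      _ ≤ k := hcard
  · simp only [not_exists, not_and, not_not] at hex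
    set φ : V → Sym2 V := fun w => if s(u, w) ∈ Em then s(u, w) else s(v, w) with hφ
    have hspec : ∀ w ∈ F, φ w ∈ Em ∧ (φ w = s(u, w) ∨ φ w = s(v, w)) := by
      intro w hw
      simp only [hφ]
      split_ifs with c1
      · exact ⟨c1, Or.inl rfl⟩
      · exact ⟨hex w hw c1, Or.inr rfl⟩
    have hmaps : ∀ w ∈ F, φ w ∈ Ep ∪ Em := fun w hw =>
      Finset.mem_union_right _ (hspec w hw).1
    have hinj : Set.InjOn φ ↑F := by
      intro w hw w' hw' heq
      have hwF : w ∈ F := hw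
      have hw'F : w' ∈ F := hw'
      rcases (hspec w hwF).2 with hq | hq <;> rcases (hspec w' hw'F).2 with hq' | hq'
      · exact huu w hwF w' hw'F (by rw [← hq, ← hq', heq])
      · exact absurd (by rw [← hq, ← hq', heq] : s(u, w) = s(v, w'))
          (fun h => huv2 w hwF w' h)
      · exact absurd (by rw [← hq, ← hq', heq.symm] : s(u, w') = s(v, w))
          (fun h => huv2 w' hw'F w h)
      · exact hvv w hwF w' hw'F (by rw [← hq, ← hq', heq])
    calc F.card ≤ (Ep ∪ Em).card := Finset.card_le_card_of_injOn φ hmaps hinj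
      _ ≤ Ep.card + Em.card := Finset.card_union_le _ _
      _ ≤ k := hcard
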